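/- arXiv:2509.20470 — 2 statements merged into one kernel-verified Lean document; each statement's English description precedes it below -/
import Mathlib

section
/- Let Y be a 2×n matrix of indeterminates over the field 𝔽₂ with two elements. Then the radical of the ideal I₁(YᵀY) of 𝔽₂[Y] equals the ideal generated by the n linear forms y_{11}+y_{21}, y_{12}+y_{22}, …, y_{1n}+y_{2n}. -/
open MvPolynomial Matrix

/-- The generic `t × n` matrix `Y` of indeterminates over a base ring `R`. -/
noncomputable def Ysym (R : Type) [CommRing R] (t n : ℕ) :
    Matrix (Fin t) (Fin n) (MvPolynomial (Fin t × Fin n) R) :=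
  Matrix.of fun i j => X (i, j)

/-- The symmetric determinantal nullcone ideal `𝔅 = I₁(YᵀY)`, generated by the
entries of the symmetric matrix `YᵀY`. -/
noncomputable def symB (R : Type) [CommRing R] (t n : ℕ) :
    Ideal (MvPolynomial (Fin t × Fin n) R) :=
  Ideal.span (Set.range fun p : Fin n × Fin n =>
    ((Ysym R t n)ᵀ * Ysym R t n) p.1 p.2)

/-! The linear forms `y_{1j} + y_{2j}` span the kernel of the substitution `y_{2j} ↦ y_{1j}`,
which lands in a domain, so they span a prime ideal. That ideal contains every entry
`y_{1a} y_{1b} + y_{2a} y_{2b}` of `YᵀY` in characteristic two, and its generators square to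
the diagonal entries `y_{1j}² + y_{2j}² = (y_{1j} + y_{2j})²`, so it is the radical of
`I₁(YᵀY)`. -/

namespace MvPolynomial

variable {R σ : Type*} [CommRing R]

theorem sub_rename_mem_span_X_sub_X (f : σ → σ) (p : MvPolynomial σ R) :
    p - rename f p ∈ Ideal.span (Set.range fun i => X i - X (f i)) := by
  induction p using MvPolynomial.induction_on with
  | C a => simp
  | add p q hp hq =>
    rw [map_add, add_sub_add_comm]
    exact Ideal.add_mem _ hp hq
  | mul_X p i hp =>
    have hsplit : p * X i - rename f (p * X i) =
        p * (X i - X (f i)) + (p - rename f p) * X (f i) := by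
      rw [map_mul, rename_X]; ring
    rw [hsplit]
    exact Ideal.add_mem _ (Ideal.mul_mem_left _ _ (Ideal.subset_span ⟨i, rfl⟩))
      (Ideal.mul_mem_right _ _ hp)

theorem ker_rename_of_idempotent {f : σ → σ} (hf : ∀ i, f (f i) = f i) :
    RingHom.ker (rename f : MvPolynomial σ R →ₐ[R] MvPolynomial σ R) =
      Ideal.span (Set.range fun i => X i - X (f i)) := by
  apply le_antisymm
  · intro p hp
    simpa [RingHom.mem_ker.mp hp] using sub_rename_mem_span_X_sub_X (R := R) f p
  · rw [Ideal.span_le]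
    rintro _ ⟨i, rfl⟩
    simp [hf]

theorem isPrime_span_X_sub_X_of_idempotent [IsDomain R] {f : σ → σ}
    (hf : ∀ i, f (f i) = f i) :
    (Ideal.span (Set.range fun i => X i - X (f i) : Set (MvPolynomial σ R))).IsPrime := by
  rw [← ker_rename_of_idempotent hf]
  exact RingHom.ker_isPrime _

end MvPolynomial

noncomputable abbrev spanRowSum (R : Type) [CommRing R] (n : ℕ) :
    Ideal (MvPolynomial (Fin 2 × Fin n) R) :=
  Ideal.span (Set.range fun j : Fin n => X ((0 : Fin 2), j) + X ((1 : Fin 2), j))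

section

variable {R : Type} [CommRing R] {n : ℕ}

theorem Ysym_transpose_mul_self_apply (a b : Fin n) :
    ((Ysym R 2 n)ᵀ * Ysym R 2 n) a b = X (0, a) * X (0, b) + X (1, a) * X (1, b) := by
  simp [Ysym, Matrix.mul_apply, Fin.sum_univ_two]

variable [CharP R 2]

theorem spanRowSum_eq_span_X_sub_X :
    spanRowSum R n =
      Ideal.span (Set.range fun p : Fin 2 × Fin n => X p - X ((0 : Fin 2), p.2)) := by
  have hgen (j : Fin n) : (X (0, j) + X (1, j) : MvPolynomial (Fin 2 × Fin n) R) =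
      X (1, j) - X (0, j) := by
    rw [CharTwo.sub_eq_add, add_comm]
  apply le_antisymm <;> rw [Ideal.span_le]
  · rintro _ ⟨j, rfl⟩
    simp only [SetLike.mem_coe, hgen]
    exact Ideal.subset_span ⟨(1, j), rfl⟩
  · rintro _ ⟨⟨i, j⟩, rfl⟩
    fin_cases i
    · simp
    · show X (1, j) - X (0, j) ∈ spanRowSum R n
      rw [← hgen]
      exact Ideal.subset_span ⟨j, rfl⟩

theorem isPrime_spanRowSum [IsDomain R] : (spanRowSum R n).IsPrime := by
  rw [spanRowSum_eq_span_X_sub_X]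
  exact isPrime_span_X_sub_X_of_idempotent fun _ => rfl

theorem symB_le_spanRowSum : symB R 2 n ≤ spanRowSum R n := by
  rw [symB, Ideal.span_le]
  rintro _ ⟨⟨a, b⟩, rfl⟩
  have h2 : (2 : MvPolynomial (Fin 2 × Fin n) R) = 0 := CharTwo.two_eq_zero
  have hsplit : ((Ysym R 2 n)ᵀ * Ysym R 2 n) a b =
      X (0, a) * (X (0, b) + X (1, b)) + (X (0, a) + X (1, a)) * X (1, b) := by
    rw [Ysym_transpose_mul_self_apply]
    linear_combination -(X (0, a) * X (1, b)) * h2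
  simp only [SetLike.mem_coe, hsplit]
  exact Ideal.add_mem _ (Ideal.mul_mem_left _ _ (Ideal.subset_span ⟨b, rfl⟩))
    (Ideal.mul_mem_right _ _ (Ideal.subset_span ⟨a, rfl⟩))

theorem spanRowSum_le_radical_symB : spanRowSum R n ≤ (symB R 2 n).radical := by
  rw [Ideal.span_le]
  rintro _ ⟨j, rfl⟩
  refine ⟨2, ?_⟩
  rw [CharTwo.add_sq, sq, sq, ← Ysym_transpose_mul_self_apply]
  exact Ideal.subset_span ⟨(j, j), rfl⟩

end

/-- For a `2 × n` matrix of indeterminates `Y` over the two-element field `𝔽₂`,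
the radical of the ideal `I₁(YᵀY)` of `𝔽₂[Y]` is the ideal generated by the `n`
linear forms `y_{1j} + y_{2j}`. -/
theorem radical_symmetric_nullcone_char_two (n : ℕ) :
    (symB (ZMod 2) 2 n).radical =
      Ideal.span (Set.range fun j : Fin n =>
        (X ((0 : Fin 2), j) + X ((1 : Fin 2), j) :
          MvPolynomial (Fin 2 × Fin n) (ZMod 2))) :=
  le_antisymm (isPrime_spanRowSum.radical_le_iff.mpr symB_le_spanRowSum)
    spanRowSum_le_radical_symB
end

section
/- Let Y be a t×n matrix of indeterminates over an infinite field K of characteristic other than two, with t ≥ 2. Set S = K[Y] and 𝔅 = I₁(YᵀY). Then the arithmetic rank of the extended ideal 𝔅·S_{y₁₁} in the localization S_{y₁₁} of S at the element y₁₁ satisfies ara(𝔅 S_{y₁₁}) ≤ C(n+1,2) − C(n+2−t,2). -/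
open MvPolynomial Matrix

/-- The arithmetic rank of an ideal: the least number of elements generating it
up to radical. -/
noncomputable def ara {R : Type*} [CommRing R] (I : Ideal R) : ℕ :=
  sInf {k : ℕ | ∃ f : Fin k → R, (Ideal.span (Set.range f)).radical = I.radical}

section Auxiliary


open Finset Matrix

theorem glob_core {F : Type*} [Field F] {ν τ : ℕ}
    (c : (Fin ν × Fin ν) → (Fin ν × Fin ν) → F)
    (hc : ∀ (k : ℕ) (ρ γ : Fin k → Fin ν × Fin ν), Function.Injective ρ → Function.Injective γ →
      (Matrix.of fun i j => c (ρ i) (γ j)).det ≠ 0)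
    (G : Matrix (Fin ν) (Fin ν) F)
    (hsym : ∀ p q, G p q = G q p)
    (hminor : ∀ R C : Fin (τ+1) → Fin ν, (G.submatrix R C).det = 0)
    (hσ : ∀ p q : Fin ν, p ≤ q → (q:ℕ) < (p:ℕ) + τ →
      (G p q + ∑ pq ∈ Finset.univ.filter
          (fun pq : Fin ν × Fin ν => pq.1 < pq.2 ∧ (pq.1:ℕ) + τ ≤ (pq.2:ℕ) ∧
            (pq.1:ℕ) + (pq.2:ℕ) = (p:ℕ) + (q:ℕ)),
        c (p, q) pq * G pq.1 pq.2) = 0) :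
    ∀ p q, G p q = 0 := by
  classical
  rcases Nat.eq_zero_or_pos τ with hτ0 | hτ0
  · subst hτ0
    intro p q
    have h := hminor (fun _ => p) (fun _ => q)
    rwa [Matrix.det_fin_one] at h
  have main : ∀ (m : ℕ) (p q : Fin ν), 2*ν ≤ (p:ℕ) + (q:ℕ) + m → G p q = 0 := by
    intro m
    induction m with
    | zero =>
      intro p q h
      exact absurd h (by have h1 := p.2; have h2 := q.2; omega)
    | succ m ih =>
      intro p q hm
      by_cases hs : 2*ν ≤ (p:ℕ) + (q:ℕ) + m
      · exact ih p q hs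
      set s := (p:ℕ) + (q:ℕ) with hsdef
      have hAbove : ∀ p' q' : Fin ν, s < (p':ℕ) + (q':ℕ) → G p' q' = 0 := by
        intro p' q' h'
        exact ih p' q' (by omega)
      set N1 : Finset (Fin ν) := Finset.univ.filter
        (fun r => ∃ r' : Fin ν, (r:ℕ) + (r':ℕ) = s ∧ G r r' ≠ 0) with hN1def
      have hprod : ∀ (r r' : Fin (τ+1) → Fin ν),
          StrictMono (fun i => ((r i : Fin ν) : ℕ)) →
          (∀ i, ((r i : Fin ν) : ℕ) + ((r' i : Fin ν) : ℕ) = s) →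
          (∏ i : Fin (τ+1), G (r i) (r' i)) = 0 := by
        intro r r' hmono hsum
        have hdet := hminor r r'
        have htri : (G.submatrix r r').BlockTriangular id := by
          intro i j hij
          have h1 : ((r j : Fin ν) : ℕ) < ((r i : Fin ν) : ℕ) := hmono hij
          have h2 := hsum j
          exact hAbove (r i) (r' j) (by omega)
        rw [Matrix.det_of_upperTriangular htri] at hdet
        exact hdet
      have hN1card : N1.card ≤ τ := by
        by_contra hcon
        push_neg at hcon
        obtain ⟨tt, hts, htc⟩ := Finset.exists_subset_card_eq (show τ+1 ≤ N1.card by omega)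
        let e := tt.orderIsoOfFin htc
        have hw : ∀ i : Fin (τ+1), ∃ r' : Fin ν,
            (((e i : {x // x ∈ tt}) : Fin ν) : ℕ) + (r' : ℕ) = s ∧
              G ((e i : {x // x ∈ tt}) : Fin ν) r' ≠ 0 := by
          intro i
          have hmem : ((e i : {x // x ∈ tt}) : Fin ν) ∈ N1 := hts (e i).2
          rw [hN1def] at hmem
          simp only [Finset.mem_filter, Finset.mem_univ, true_and] at hmem
          exact hmem
        choose r' hr's hr'ne using hw
        have hmono : StrictMono (fun i : Fin (τ+1) => (((e i : {x // x ∈ tt}) : Fin ν) : ℕ)) := by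
          intro i j hij
          exact e.strictMono hij
        have h0 := hprod (fun i => ((e i : {x // x ∈ tt}) : Fin ν)) r' hmono hr's
        have hne : (∏ i : Fin (τ+1), G ((e i : {x // x ∈ tt}) : Fin ν) (r' i)) ≠ 0 :=
          Finset.prod_ne_zero_iff.mpr (fun i _ => hr'ne i)
        exact hne h0
      set dropped : Finset (Fin ν × Fin ν) := Finset.univ.filter
        (fun pq : Fin ν × Fin ν => pq.1 < pq.2 ∧ (pq.1:ℕ) + τ ≤ (pq.2:ℕ) ∧
          (pq.1:ℕ) + (pq.2:ℕ) = s) with hdroppeddef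
      set central : Finset (Fin ν × Fin ν) := Finset.univ.filter
        (fun pq : Fin ν × Fin ν => pq.1 ≤ pq.2 ∧ (pq.2:ℕ) < (pq.1:ℕ) + τ ∧
          (pq.1:ℕ) + (pq.2:ℕ) = s) with hcentraldef
      set supp := dropped.filter (fun pq => G pq.1 pq.2 ≠ 0) with hsuppdef
      set surv := central.filter (fun pq => G pq.1 pq.2 ≠ 0) with hsurvdef
      set killed := central.filter (fun pq => ¬ (G pq.1 pq.2 ≠ 0)) with hkilleddef
      have hσs : ∀ pq ∈ central,
          G pq.1 pq.2 + ∑ ab ∈ dropped, c pq ab * G ab.1 ab.2 = 0 := by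
        intro pq hpq
        rw [hcentraldef, Finset.mem_filter] at hpq
        obtain ⟨-, h1, h2, h3⟩ := hpq
        have hh := hσ pq.1 pq.2 h1 h2
        rw [h3] at hh
        exact hh
      have hsupp0 : supp = ∅ := by
        by_contra hne
        obtain ⟨pq₀, hpq₀⟩ := Finset.nonempty_of_ne_empty hne
        set u := supp.card with hu
        have hu1 : 1 ≤ u := Finset.card_pos.mpr ⟨pq₀, hpq₀⟩
        have hpq₀d : pq₀ ∈ dropped := Finset.mem_of_mem_filter _ hpq₀
        have hpq₀props : pq₀.1 < pq₀.2 ∧ (pq₀.1:ℕ) + τ ≤ (pq₀.2:ℕ) ∧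
            (pq₀.1:ℕ) + (pq₀.2:ℕ) = s := by
          rw [hdroppeddef, Finset.mem_filter] at hpq₀d; exact hpq₀d.2
        have hq₀lt : (pq₀.2 : ℕ) < ν := pq₀.2.2
        -- (C1): killed.card < u
        have hkill : killed.card < u := by
          by_contra hk
          push_neg at hk
          obtain ⟨tk, htk, htkc⟩ := Finset.exists_subset_card_eq hk
          set ρ : Fin u → Fin ν × Fin ν := fun i => ((tk.equivFinOfCardEq htkc).symm i : _)
            with hρdef
          set γ : Fin u → Fin ν × Fin ν := fun j => ((supp.equivFinOfCardEq rfl).symm j : _)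
            with hγdef
          have hρinj : Function.Injective ρ :=
            Subtype.val_injective.comp (Equiv.injective _)
          have hγinj : Function.Injective γ :=
            Subtype.val_injective.comp (Equiv.injective _)
          have hγsupp : ∀ j, γ j ∈ supp := fun j => ((supp.equivFinOfCardEq rfl).symm j).2
          have hρkill : ∀ i, ρ i ∈ killed := fun i => htk ((tk.equivFinOfCardEq htkc).symm i).2
          set M : Matrix (Fin u) (Fin u) F := Matrix.of (fun i j => c (ρ i) (γ j)) with hM
          have hrow : ∀ i, (M *ᵥ (fun j => G (γ j).1 (γ j).2)) i = 0 := by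
            intro i
            have hcen : ρ i ∈ central := Finset.mem_of_mem_filter _ (hρkill i)
            have hzero : G (ρ i).1 (ρ i).2 = 0 := by
              have hh := hρkill i
              rw [hkilleddef, Finset.mem_filter] at hh
              simpa using hh.2
            have h1 : (M *ᵥ (fun j => G (γ j).1 (γ j).2)) i
                = ∑ j : Fin u, c (ρ i) (γ j) * G (γ j).1 (γ j).2 := by
              simp [hM, Matrix.mulVec, dotProduct]
            have h2 : ∑ j : Fin u, c (ρ i) (γ j) * G (γ j).1 (γ j).2
                = ∑ ab ∈ supp, c (ρ i) ab * G ab.1 ab.2 := by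
              rw [← Finset.sum_coe_sort supp (fun ab => c (ρ i) ab * G ab.1 ab.2)]
              exact Equiv.sum_comp (supp.equivFinOfCardEq rfl).symm
                (fun x : {x // x ∈ supp} =>
                  c (ρ i) (x : Fin ν × Fin ν) * G (x : Fin ν × Fin ν).1 (x : Fin ν × Fin ν).2)
            have h3 : ∑ ab ∈ supp, c (ρ i) ab * G ab.1 ab.2
                = ∑ ab ∈ dropped, c (ρ i) ab * G ab.1 ab.2 := by
              apply Finset.sum_subset (Finset.filter_subset _ _)
              intro ab habd habs
              have hG0 : G ab.1 ab.2 = 0 := by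
                by_contra hGne
                exact habs (Finset.mem_filter.mpr ⟨habd, hGne⟩)
              rw [hG0, mul_zero]
            have h4 := hσs (ρ i) hcen
            rw [hzero, zero_add] at h4
            rw [h1, h2, h3, h4]
          have hvec0 : (fun j => G (γ j).1 (γ j).2) ≠ 0 := by
            intro hcontra
            have h5 := congrFun hcontra ⟨0, hu1⟩
            have hmem := hγsupp ⟨0, hu1⟩
            rw [hsuppdef, Finset.mem_filter] at hmem
            exact hmem.2 h5
          have hdet0 : M.det = 0 :=
            Matrix.exists_mulVec_eq_zero_iff.mp ⟨_, hvec0, funext hrow⟩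
          exact hc u ρ γ hρinj hγinj hdet0
        -- (C2): counting
        set contrib := supp ∪ surv with hcontribdef
        have hdisj : Disjoint supp surv := by
          rw [Finset.disjoint_left]
          intro ab habs habv
          have h1 := Finset.mem_of_mem_filter _ habs
          have h2 := Finset.mem_of_mem_filter _ habv
          rw [hdroppeddef, Finset.mem_filter] at h1
          rw [hcentraldef, Finset.mem_filter] at h2
          omega
        have hpiece : ∀ ab ∈ contrib, ab.1 ≤ ab.2 ∧ (ab.1:ℕ) + (ab.2:ℕ) = s ∧
            G ab.1 ab.2 ≠ 0 := by
          intro ab hab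
          rcases Finset.mem_union.mp hab with h | h
          · have h1 := Finset.mem_of_mem_filter _ h
            rw [hdroppeddef, Finset.mem_filter] at h1
            rw [hsuppdef, Finset.mem_filter] at h
            exact ⟨le_of_lt h1.2.1, h1.2.2.2, h.2⟩
          · have h1 := Finset.mem_of_mem_filter _ h
            rw [hcentraldef, Finset.mem_filter] at h1
            rw [hsurvdef, Finset.mem_filter] at h
            exact ⟨h1.2.1, h1.2.2.2, h.2⟩
        set idx := contrib.biUnion (fun ab => ({ab.1, ab.2} : Finset (Fin ν))) with hidxdef
        have hidxsub : idx ⊆ N1 := by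
          intro r hr
          rw [hidxdef, Finset.mem_biUnion] at hr
          obtain ⟨ab, hab, hr⟩ := hr
          obtain ⟨hle, hsum, hne'⟩ := hpiece ab hab
          rw [hN1def, Finset.mem_filter]
          rcases Finset.mem_insert.mp hr with h | h
          · subst h
            exact ⟨Finset.mem_univ _, ab.2, hsum, hne'⟩
          · rw [Finset.mem_singleton] at h
            subst h
            refine ⟨Finset.mem_univ _, ab.1, by omega, ?_⟩
            rw [hsym]; exact hne'
        have hpair_disj : ∀ a ∈ contrib, ∀ b ∈ contrib, a ≠ b →
            Disjoint ({a.1, a.2} : Finset (Fin ν)) ({b.1, b.2} : Finset (Fin ν)) := by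
          intro a ha b hb hab
          obtain ⟨hle, hsum, -⟩ := hpiece a ha
          obtain ⟨hle', hsum', -⟩ := hpiece b hb
          rw [Finset.disjoint_left]
          intro r hra hrb
          apply hab
          have hra' : (r:ℕ) = (a.1:ℕ) ∨ (r:ℕ) = (a.2:ℕ) := by
            rcases Finset.mem_insert.mp hra with h | h
            · left; rw [h]
            · right; rw [Finset.mem_singleton] at h; rw [h]
          have hrb' : (r:ℕ) = (b.1:ℕ) ∨ (r:ℕ) = (b.2:ℕ) := by
            rcases Finset.mem_insert.mp hrb with h | h
            · left; rw [h]
            · right; rw [Finset.mem_singleton] at h; rw [h]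
          have hle2 : (a.1:ℕ) ≤ (a.2:ℕ) := hle
          have hle2' : (b.1:ℕ) ≤ (b.2:ℕ) := hle'
          have heq : (a.1:ℕ) = (b.1:ℕ) ∧ (a.2:ℕ) = (b.2:ℕ) := by omega
          have e1 : a = (a.1, a.2) := rfl
          have e2 : b = (b.1, b.2) := rfl
          rw [e1, e2, Prod.mk.injEq]
          exact ⟨Fin.ext heq.1, Fin.ext heq.2⟩
        have hidxcard : idx.card = ∑ ab ∈ contrib, ({ab.1, ab.2} : Finset (Fin ν)).card :=
          Finset.card_biUnion hpair_disj
        have hsum_supp : ∑ ab ∈ supp, ({ab.1, ab.2} : Finset (Fin ν)).card = 2 * u := by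
          have hall : ∀ ab ∈ supp, ({ab.1, ab.2} : Finset (Fin ν)).card = 2 := by
            intro ab hab
            have h1 := Finset.mem_of_mem_filter _ hab
            rw [hdroppeddef, Finset.mem_filter] at h1
            have hne' : ab.1 ≠ ab.2 := ne_of_lt h1.2.1
            rw [Finset.card_insert_of_notMem (by simpa using hne'), Finset.card_singleton]
          rw [Finset.sum_congr rfl hall, Finset.sum_const, smul_eq_mul, mul_comm]
        set fix := surv.filter (fun ab => ab.1 = ab.2) with hfixdef
        have hfixcard : fix.card ≤ 1 := by
          rw [Finset.card_le_one]
          intro a ha b hb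
          rw [hfixdef, Finset.mem_filter] at ha hb
          have ha2 := Finset.mem_of_mem_filter _ ha.1
          have hb2 := Finset.mem_of_mem_filter _ hb.1
          rw [hcentraldef, Finset.mem_filter] at ha2 hb2
          have h1 : (a.1:ℕ) = a.2 := by rw [ha.2]
          have h2 : (b.1:ℕ) = b.2 := by rw [hb.2]
          have : (a.1:ℕ) = (b.1:ℕ) ∧ (a.2:ℕ) = (b.2:ℕ) := by omega
          have e1 : a = (a.1, a.2) := rfl
          have e2 : b = (b.1, b.2) := rfl
          rw [e1, e2, Prod.mk.injEq]
          exact ⟨Fin.ext this.1, Fin.ext this.2⟩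
        have hfixodd : s % 2 = 1 → fix.card = 0 := by
          intro hodd
          rw [Finset.card_eq_zero]
          rw [Finset.eq_empty_iff_forall_notMem]
          intro ab hab
          rw [hfixdef, Finset.mem_filter] at hab
          have ha2 := Finset.mem_of_mem_filter _ hab.1
          rw [hcentraldef, Finset.mem_filter] at ha2
          have h1 : (ab.1:ℕ) = ab.2 := by rw [hab.2]
          omega
        have hsum_surv : ∑ ab ∈ surv, ({ab.1, ab.2} : Finset (Fin ν)).card + fix.card
            = 2 * surv.card := by
          have hsplit := Finset.card_filter_add_card_filter_not
            (s := surv) (p := fun ab : Fin ν × Fin ν => ab.1 = ab.2)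
          have h21 : ∀ ab ∈ fix, ({ab.1, ab.2} : Finset (Fin ν)).card = 1 := by
            intro ab hab
            rw [hfixdef, Finset.mem_filter] at hab
            rw [hab.2]
            simp
          have h22 : ∀ ab ∈ surv.filter (fun ab => ¬ ab.1 = ab.2),
              ({ab.1, ab.2} : Finset (Fin ν)).card = 2 := by
            intro ab hab
            rw [Finset.mem_filter] at hab
            rw [Finset.card_insert_of_notMem (by simpa using hab.2), Finset.card_singleton]
          rw [← Finset.sum_filter_add_sum_filter_not surv (fun ab : Fin ν × Fin ν => ab.1 = ab.2)]
          rw [Finset.sum_congr rfl h21, Finset.sum_congr rfl h22]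
          rw [Finset.sum_const, Finset.sum_const, smul_eq_mul, smul_eq_mul]
          rw [hfixdef]
          omega
        -- κ lower bound
        have hν0 : 0 < ν := by omega
        have hκ : s / 2 - (s - τ) / 2 ≤ central.card := by
          have hinj : ∀ y ∈ Finset.Ico ((s - τ)/2 + 1) (s/2 + 1),
              ((⟨y % ν, Nat.mod_lt y hν0⟩ : Fin ν), (⟨(s - y) % ν, Nat.mod_lt _ hν0⟩ : Fin ν))
                ∈ central := by
            intro y hy
            rw [Finset.mem_Ico] at hy
            have hy1 : 2 * y ≤ s := by omega
            have hy2 : s - τ + 1 ≤ 2 * y := by omega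
            have hsbig : s + τ ≤ 2 * ν - 2 := by omega
            have hyν : y < ν := by omega
            have hsyν : s - y < ν := by omega
            rw [hcentraldef, Finset.mem_filter]
            refine ⟨Finset.mem_univ _, ?_, ?_, ?_⟩
            · show (⟨y % ν, _⟩ : Fin ν) ≤ ⟨(s - y) % ν, _⟩
              rw [Fin.le_def]
              simp only
              rw [Nat.mod_eq_of_lt hyν, Nat.mod_eq_of_lt hsyν]
              omega
            · simp only
              rw [Nat.mod_eq_of_lt hyν, Nat.mod_eq_of_lt hsyν]
              omega
            · simp only
              rw [Nat.mod_eq_of_lt hyν, Nat.mod_eq_of_lt hsyν]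
              omega
          have hinjOn : Set.InjOn (fun y : ℕ =>
              ((⟨y % ν, Nat.mod_lt y hν0⟩ : Fin ν), (⟨(s - y) % ν, Nat.mod_lt _ hν0⟩ : Fin ν)))
              ↑(Finset.Ico ((s - τ)/2 + 1) (s/2 + 1)) := by
            intro y1 hy1 y2 hy2 heq
            simp only [Finset.coe_Ico, Set.mem_Ico] at hy1 hy2
            have h1 : y1 % ν = y2 % ν := by
              have := congrArg (fun z => ((z.1 : Fin ν) : ℕ)) heq
              simpa using this
            have hy1ν : y1 < ν := by omega
            have hy2ν : y2 < ν := by omega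
            rwa [Nat.mod_eq_of_lt hy1ν, Nat.mod_eq_of_lt hy2ν] at h1
          have hcc := Finset.card_le_card_of_injOn _ hinj hinjOn
          rw [Nat.card_Ico] at hcc
          omega
        -- assemble the contradiction
        have hidxN1 : idx.card ≤ τ := le_trans (Finset.card_le_card hidxsub) hN1card
        rw [hidxcard, hcontribdef, Finset.sum_union hdisj, hsum_supp] at hidxN1
        have hsplitc := Finset.card_filter_add_card_filter_not
          (s := central) (p := fun ab : Fin ν × Fin ν => G ab.1 ab.2 ≠ 0)
        rw [← hsurvdef, ← hkilleddef] at hsplitc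
        have hτs : τ ≤ s := by omega
        omega
      -- stage conclusion
      have hdropzero : ∀ ab ∈ dropped, G ab.1 ab.2 = 0 := by
        intro ab hab
        by_contra hGne
        have hmem : ab ∈ supp := by rw [hsuppdef]; exact Finset.mem_filter.mpr ⟨hab, hGne⟩
        rw [hsupp0] at hmem
        exact absurd hmem (Finset.notMem_empty _)
      have hcentzero : ∀ ab ∈ central, G ab.1 ab.2 = 0 := by
        intro ab hab
        have h := hσs ab hab
        rw [Finset.sum_eq_zero (fun x hx => by rw [hdropzero x hx, mul_zero])] at h
        simpa using h
      have hans : ∀ a b : Fin ν, a ≤ b → (a:ℕ) + (b:ℕ) = s → G a b = 0 := by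
        intro a b hab hsum
        have hab' : (a:ℕ) ≤ (b:ℕ) := hab
        by_cases hband : (b:ℕ) < (a:ℕ) + τ
        · refine hcentzero (a,b) ?_
          rw [hcentraldef, Finset.mem_filter]
          exact ⟨Finset.mem_univ _, hab, hband, hsum⟩
        · refine hdropzero (a,b) ?_
          rw [hdroppeddef, Finset.mem_filter]
          refine ⟨Finset.mem_univ _, ?_, by show (a:ℕ) + τ ≤ (b:ℕ); omega, hsum⟩
          show a < b
          rw [Fin.lt_def]
          omega
      rcases le_total p q with hpq | hpq
      · exact hans p q hpq rfl
      · rw [hsym]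
        exact hans q p hpq (by omega)
  intro p q
  exact main (2*ν) p q (by omega)

section NullconePointwise

open Matrix

variable {R : Type*} [CommRing R] {τ ν : ℕ}

/-- tail of the 0-th column -/
def vtail (Y : Matrix (Fin (τ+2)) (Fin (ν+1)) R) : Fin (τ+1) → R := fun i => Y i.succ 0

/-- tail of the (j+1)-st column -/
def ctail (Y : Matrix (Fin (τ+2)) (Fin (ν+1)) R) (j : Fin ν) : Fin (τ+1) → R :=
  fun i => Y i.succ j.succ

/-- squared norm of the tail of column 0 -/
def sva (Y : Matrix (Fin (τ+2)) (Fin (ν+1)) R) : R := vtail Y ⬝ᵥ vtail Y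

/-- inner product of tails -/
def wva (Y : Matrix (Fin (τ+2)) (Fin (ν+1)) R) (j : Fin ν) : R := vtail Y ⬝ᵥ ctail Y j

/-- projected column vectors -/
def dvec (Y : Matrix (Fin (τ+2)) (Fin (ν+1)) R) (j : Fin ν) : Fin (τ+1) → R :=
  sva Y • ctail Y j - wva Y j • vtail Y

lemma dvec_dot_vtail (Y : Matrix (Fin (τ+2)) (Fin (ν+1)) R) (j : Fin ν) :
    dvec Y j ⬝ᵥ vtail Y = 0 := by
  unfold dvec
  simp only [sub_dotProduct, dotProduct_sub, smul_dotProduct,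
    dotProduct_smul, smul_eq_mul]
  rw [show ctail Y j ⬝ᵥ vtail Y = vtail Y ⬝ᵥ ctail Y j from dotProduct_comm _ _]
  rw [show vtail Y ⬝ᵥ ctail Y j = wva Y j from rfl, show vtail Y ⬝ᵥ vtail Y = sva Y from rfl]
  ring

lemma dvec_dot_dvec (Y : Matrix (Fin (τ+2)) (Fin (ν+1)) R) (p q : Fin ν) :
    dvec Y p ⬝ᵥ dvec Y q
      = sva Y * (sva Y * (ctail Y p ⬝ᵥ ctail Y q) - wva Y p * wva Y q) := by
  unfold dvec
  simp only [sub_dotProduct, dotProduct_sub, smul_dotProduct,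
    dotProduct_smul, smul_eq_mul]
  rw [show ctail Y p ⬝ᵥ vtail Y = vtail Y ⬝ᵥ ctail Y p from dotProduct_comm _ _]
  rw [show vtail Y ⬝ᵥ ctail Y p = wva Y p from rfl, show vtail Y ⬝ᵥ ctail Y q = wva Y q from rfl,
    show vtail Y ⬝ᵥ vtail Y = sva Y from rfl]
  ring

lemma ZtY_entry (Y : Matrix (Fin (τ+2)) (Fin (ν+1)) R) (a b : Fin (ν+1)) :
    (Yᵀ * Y) a b = Y 0 a * Y 0 b + (fun i : Fin (τ+1) => Y i.succ a) ⬝ᵥ (fun i : Fin (τ+1) => Y i.succ b) := by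
  rw [Matrix.mul_apply]
  simp only [Matrix.transpose_apply]
  rw [Fin.sum_univ_succ]
  rfl

lemma ZtY_symm (Y : Matrix (Fin (τ+2)) (Fin (ν+1)) R) (a b : Fin (ν+1)) :
    (Yᵀ * Y) a b = (Yᵀ * Y) b a := by
  rw [Matrix.mul_apply, Matrix.mul_apply]
  simp only [Matrix.transpose_apply]
  exact Finset.sum_congr rfl (fun i _ => mul_comm _ _)

lemma ZtY_00 (Y : Matrix (Fin (τ+2)) (Fin (ν+1)) R) :
    (Yᵀ * Y) 0 0 = Y 0 0 * Y 0 0 + sva Y := by rw [ZtY_entry]; rfl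

lemma ZtY_0succ (Y : Matrix (Fin (τ+2)) (Fin (ν+1)) R) (k : Fin ν) :
    (Yᵀ * Y) 0 k.succ = Y 0 0 * Y 0 k.succ + wva Y k := by rw [ZtY_entry]; rfl

lemma ZtY_succ_succ (Y : Matrix (Fin (τ+2)) (Fin (ν+1)) R) (j k : Fin ν) :
    (Yᵀ * Y) j.succ k.succ = Y 0 j.succ * Y 0 k.succ + ctail Y j ⬝ᵥ ctail Y k := by
  rw [ZtY_entry]; rfl

end NullconePointwise

theorem nullcone_pointwise {F : Type*} [Field F] {τ ν : ℕ}
    (c : (Fin ν × Fin ν) → (Fin ν × Fin ν) → F)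
    (hc : ∀ (k : ℕ) (ρ γ : Fin k → Fin ν × Fin ν), Function.Injective ρ → Function.Injective γ →
      (Matrix.of fun i j => c (ρ i) (γ j)).det ≠ 0)
    (Y : Matrix (Fin (τ+2)) (Fin (ν+1)) F)
    (hq0 : ∀ k : Fin (ν+1), (Yᵀ * Y) 0 k = 0)
    (hσY : ∀ p q : Fin ν, p ≤ q → (q:ℕ) < (p:ℕ) + τ →
      ((dvec Y p ⬝ᵥ dvec Y q) + ∑ pq ∈ Finset.univ.filter
          (fun pq : Fin ν × Fin ν => pq.1 < pq.2 ∧ (pq.1:ℕ) + τ ≤ (pq.2:ℕ) ∧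
            (pq.1:ℕ) + (pq.2:ℕ) = (p:ℕ) + (q:ℕ)),
        c (p, q) pq * (dvec Y pq.1 ⬝ᵥ dvec Y pq.2)) = 0) :
    Y 0 0 = 0 ∨ ∀ a b, (Yᵀ * Y) a b = 0 := by
  by_cases h0 : Y 0 0 = 0
  · exact Or.inl h0
  right
  have hsva : sva Y = -(Y 0 0 * Y 0 0) := by
    have h := hq0 0
    rw [ZtY_00] at h
    linear_combination h
  have hsva0 : sva Y ≠ 0 := by
    rw [hsva]
    intro hcon
    apply h0
    have hsq : Y 0 0 * Y 0 0 = 0 := by linear_combination -hcon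
    exact mul_self_eq_zero.mp hsq
  have hvne : vtail Y ≠ 0 := by
    intro hv
    apply hsva0
    unfold sva
    rw [hv]
    simp
  -- the Gram matrix of the projected vectors
  set G : Matrix (Fin ν) (Fin ν) F := Matrix.of (fun p q => dvec Y p ⬝ᵥ dvec Y q) with hGdef
  have hGsym : ∀ p q, G p q = G q p := by
    intro p q
    simp only [hGdef, Matrix.of_apply]
    exact dotProduct_comm _ _
  have hGminor : ∀ R C : Fin (τ+1) → Fin ν, (G.submatrix R C).det = 0 := by
    intro R C
    set A : Matrix (Fin (τ+1)) (Fin (τ+1)) F := Matrix.of (fun p i => dvec Y (R p) i) with hA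
    set B : Matrix (Fin (τ+1)) (Fin (τ+1)) F := Matrix.of (fun q i => dvec Y (C q) i) with hB
    have hfact : G.submatrix R C = A * Bᵀ := by
      ext p q
      simp only [Matrix.submatrix_apply, hGdef, Matrix.of_apply, Matrix.mul_apply,
        Matrix.transpose_apply, hA, hB]
      rfl
    have hAdet : A.det = 0 := by
      rw [← Matrix.exists_mulVec_eq_zero_iff]
      refine ⟨vtail Y, hvne, ?_⟩
      funext p
      show A.mulVec (vtail Y) p = 0
      rw [Matrix.mulVec]
      exact dvec_dot_vtail Y (R p)
    rw [hfact, Matrix.det_mul, hAdet, zero_mul]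
  have hG0 : ∀ p q, G p q = 0 :=
    glob_core c hc G hGsym hGminor (fun p q h1 h2 => hσY p q h1 h2)
  -- recover the vanishing of Yᵀ Y
  have hw : ∀ k : Fin ν, Y 0 0 * Y 0 k.succ + wva Y k = 0 := by
    intro k
    have h := hq0 k.succ
    rw [ZtY_0succ] at h
    exact h
  have hmain : ∀ j k : Fin ν, (Yᵀ * Y) j.succ k.succ = 0 := by
    intro j k
    have hGjk := hG0 j k
    simp only [hGdef, Matrix.of_apply] at hGjk
    rw [dvec_dot_dvec] at hGjk
    have hinner : sva Y * (ctail Y j ⬝ᵥ ctail Y k) = wva Y j * wva Y k := by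
      have := mul_eq_zero.mp hGjk
      rcases this with h | h
      · exact absurd h hsva0
      · linear_combination h
    rw [ZtY_succ_succ]
    have hwj := hw j
    have hwk := hw k
    have hcancel : (Y 0 0 * Y 0 0) * (Y 0 j.succ * Y 0 k.succ + ctail Y j ⬝ᵥ ctail Y k) = 0 := by
      have e1 : wva Y j = -(Y 0 0 * Y 0 j.succ) := by linear_combination hwj
      have e2 : wva Y k = -(Y 0 0 * Y 0 k.succ) := by linear_combination hwk
      have e3 : sva Y = -(Y 0 0 * Y 0 0) := hsva
      rw [e1, e2, e3] at hinner
      linear_combination -hinner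
    have h00 : Y 0 0 * Y 0 0 ≠ 0 := mul_ne_zero h0 h0
    exact (mul_eq_zero.mp hcancel).resolve_left h00
  intro a b
  induction a using Fin.cases with
  | zero => exact hq0 b
  | succ j =>
    induction b using Fin.cases with
    | zero => rw [ZtY_symm]; exact hq0 j.succ
    | succ k => exact hmain j k



open Finset

/-- Over an infinite field there is a matrix (indexed by an arbitrary finite type) all of
whose square submatrices, with distinct row and column indices, are nonsingular. -/
theorem exists_generic_matrix (K : Type*) [Field K] [Infinite K]
    (P : Type*) [Fintype P] [DecidableEq P] :
    ∃ c : P → P → K, ∀ (k : ℕ) (ρ γ : Fin k → P), Function.Injective ρ → Function.Injective γ →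
      (Matrix.of fun i j => c (ρ i) (γ j)).det ≠ 0 := by
  classical
  set R := MvPolynomial (P × P) K with hR
  set N := Fintype.card P with hN
  -- the universal determinant polynomials
  set D : ∀ (k : ℕ), (Fin k ↪ P) → (Fin k ↪ P) → R :=
    fun k ρ γ => (Matrix.of fun i j => (MvPolynomial.X (ρ i, γ j) : R)).det with hD
  have hDne : ∀ (k : ℕ) (ρ γ : Fin k ↪ P), D k ρ γ ≠ 0 := by
    intro k ρ γ hzero
    -- evaluate at the "identity pattern" point
    set χ₀ : P × P → K := fun pq => if ∃ i : Fin k, ρ i = pq.1 ∧ γ i = pq.2 then 1 else 0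
      with hχ₀
    have heval : MvPolynomial.eval χ₀ (D k ρ γ) = 1 := by
      rw [hD]
      rw [← Matrix.det_one (n := Fin k)]
      rw [RingHom.map_det]
      congr 1
      ext i j
      simp only [RingHom.mapMatrix_apply, Matrix.map_apply, Matrix.of_apply,
        MvPolynomial.eval_X, hχ₀]
      by_cases hij : i = j
      · subst hij
        rw [if_pos ⟨i, rfl, rfl⟩, Matrix.one_apply_eq]
      · rw [if_neg, Matrix.one_apply_ne hij]
        rintro ⟨i₀, h1, h2⟩
        exact hij (ρ.injective h1 ▸ (γ.injective h2 ▸ rfl) : i = j)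
    rw [hzero, map_zero] at heval
    exact zero_ne_one heval
  -- the product of all of them is a nonzero polynomial
  set A := Σ k : Fin (N + 1), ((Fin (k:ℕ) ↪ P) × (Fin (k:ℕ) ↪ P)) with hA
  set Φ : R := ∏ a : A, D (a.1 : ℕ) a.2.1 a.2.2 with hΦ
  have hΦne : Φ ≠ 0 := by
    rw [hΦ]
    rw [Finset.prod_ne_zero_iff]
    intro a _
    exact hDne _ _ _
  -- find a point where it does not vanish
  have hpoint : ∃ χ : P × P → K, MvPolynomial.eval χ Φ ≠ 0 := by
    by_contra hcon
    push_neg at hcon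
    apply hΦne
    apply MvPolynomial.funext
    intro x
    rw [map_zero]
    exact hcon x
  obtain ⟨χ, hχ⟩ := hpoint
  refine ⟨fun p q => χ (p, q), ?_⟩
  intro k ρ γ hρ hγ
  have hk : k ≤ N := by
    have := Fintype.card_le_of_injective ρ hρ
    simpa [hN] using this
  set a : A := ⟨⟨k, by omega⟩, ⟨ρ, hρ⟩, ⟨γ, hγ⟩⟩ with ha
  have hfactor : MvPolynomial.eval χ (D (a.1 : ℕ) a.2.1 a.2.2) ≠ 0 := by
    intro h0
    apply hχ
    rw [hΦ, map_prod]
    exact Finset.prod_eq_zero (Finset.mem_univ a) h0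
  have hident : MvPolynomial.eval χ (D (a.1 : ℕ) a.2.1 a.2.2)
      = (Matrix.of fun i j => χ (ρ i, γ j)).det := by
    rw [hD, RingHom.map_det]
    congr 1
    ext i j
    simp [RingHom.mapMatrix_apply]
    rfl
  rw [hident] at hfactor
  exact hfactor


/-- if the Gram matrix vanishes then so do the Gram products of the projected vectors -/
lemma dvec_dot_eq_zero {R : Type*} [CommRing R] {τ ν : ℕ}
    (Y : Matrix (Fin (τ+2)) (Fin (ν+1)) R)
    (hZ : ∀ a b, (Yᵀ * Y) a b = 0) (p q : Fin ν) : dvec Y p ⬝ᵥ dvec Y q = 0 := by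
  have e0 := hZ 0 0
  rw [ZtY_00] at e0
  have ewp := hZ 0 p.succ
  rw [ZtY_0succ] at ewp
  have ewq := hZ 0 q.succ
  rw [ZtY_0succ] at ewq
  have ec := hZ p.succ q.succ
  rw [ZtY_succ_succ] at ec
  rw [dvec_dot_dvec]
  have h1 : sva Y = -(Y 0 0 * Y 0 0) := by linear_combination e0
  have h2 : ctail Y p ⬝ᵥ ctail Y q = -(Y 0 p.succ * Y 0 q.succ) := by linear_combination ec
  have h3 : wva Y p = -(Y 0 0 * Y 0 p.succ) := by linear_combination ewp
  have h4 : wva Y q = -(Y 0 0 * Y 0 q.succ) := by linear_combination ewq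
  rw [h1, h2, h3, h4]
  ring

/-- ring homomorphisms commute with dot products -/
lemma map_dotProduct' {R S' : Type*} [CommRing R] [CommRing S'] (ψ : R →+* S') {m : ℕ}
    (u v : Fin m → R) :
    ψ (u ⬝ᵥ v) = (fun i => ψ (u i)) ⬝ᵥ (fun i => ψ (v i)) := by
  rw [dotProduct, dotProduct, map_sum]
  exact Finset.sum_congr rfl (fun i _ => _root_.map_mul ψ _ _)

lemma map_gram {R S' : Type*} [CommRing R] [CommRing S'] (ψ : R →+* S') {a b : ℕ}
    (Y : Matrix (Fin a) (Fin b) R) (i j : Fin b) :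
    ψ ((Yᵀ * Y) i j) = ((Y.map ψ)ᵀ * (Y.map ψ)) i j := by
  rw [Matrix.mul_apply, Matrix.mul_apply, map_sum]
  apply Finset.sum_congr rfl
  intro k _
  simp only [Matrix.transpose_apply, Matrix.map_apply, _root_.map_mul]

lemma map_dvec {R S' : Type*} [CommRing R] [CommRing S'] (ψ : R →+* S') {τ ν : ℕ}
    (Y : Matrix (Fin (τ+2)) (Fin (ν+1)) R) (j : Fin ν) (i : Fin (τ+1)) :
    ψ (dvec Y j i) = dvec (Y.map ψ) j i := by
  have h1 : ψ (sva Y) = sva (Y.map ψ) := by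
    unfold sva vtail
    rw [map_dotProduct']
    rfl
  have h2 : ψ (wva Y j) = wva (Y.map ψ) j := by
    unfold wva vtail ctail
    rw [map_dotProduct']
    rfl
  show ψ (sva Y * ctail Y j i - wva Y j * vtail Y i) = _
  rw [map_sub, _root_.map_mul, _root_.map_mul, h1, h2]
  rfl

lemma map_dvec_dot {R S' : Type*} [CommRing R] [CommRing S'] (ψ : R →+* S') {τ ν : ℕ}
    (Y : Matrix (Fin (τ+2)) (Fin (ν+1)) R) (p q : Fin ν) :
    ψ (dvec Y p ⬝ᵥ dvec Y q) = dvec (Y.map ψ) p ⬝ᵥ dvec (Y.map ψ) q := by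
  rw [map_dotProduct']
  congr 1 <;> funext i <;> exact map_dvec ψ Y _ i

universe uR

/-- every prime quotient embeds into a field -/
lemma exists_field_hom {R : Type uR} [CommRing R] (P : Ideal R) (hP : P.IsPrime) :
    ∃ (F : Type uR) (_ : Field F) (ψ : R →+* F), ∀ y, ψ y = 0 ↔ y ∈ P := by
  haveI := hP
  refine ⟨FractionRing (R ⧸ P), inferInstance,
    (algebraMap (R ⧸ P) (FractionRing (R ⧸ P))).comp (Ideal.Quotient.mk P), ?_⟩
  intro y
  rw [RingHom.comp_apply]
  rw [map_eq_zero_iff _ (IsFractionRing.injective (R ⧸ P) (FractionRing (R ⧸ P)))]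
  exact Ideal.Quotient.eq_zero_iff_mem

/-- `ara` is at most the cardinality of a finite set generating the ideal up to radical. -/
lemma ara_le_of_finset' {R : Type*} [CommRing R] (I : Ideal R) (T : Finset R) (B : ℕ)
    (hcard : T.card ≤ B) (hrad : (Ideal.span (T : Set R)).radical = I.radical) :
    ara I ≤ B := by
  classical
  set f : Fin B → R := fun i => if h : (i : ℕ) < T.card then (T.equivFin.symm ⟨(i:ℕ), h⟩ : R)
    else 0 with hf
  have hspan : Ideal.span (Set.range f) = Ideal.span (T : Set R) := by
    apply le_antisymm
    · rw [Ideal.span_le]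
      rintro x ⟨i, rfl⟩
      by_cases h : (i : ℕ) < T.card
      · rw [hf]
        simp only [dif_pos h]
        exact Ideal.subset_span (T.equivFin.symm ⟨(i:ℕ), h⟩).2
      · rw [hf]
        simp only [dif_neg h]
        exact (Ideal.span (T : Set R)).zero_mem
    · rw [Ideal.span_le]
      intro x hx
      have hx' : x ∈ T := hx
      set j := T.equivFin ⟨x, hx'⟩ with hj
      have hjB : (j : ℕ) < B := lt_of_lt_of_le j.2 hcard
      have hfj : f ⟨(j : ℕ), hjB⟩ = x := by
        rw [hf]
        simp only [dif_pos j.2]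
        have hco : (⟨(j:ℕ), j.2⟩ : Fin T.card) = j := by ext; rfl
        rw [hco, hj, Equiv.symm_apply_apply]
      rw [← hfj]
      exact Ideal.subset_span ⟨_, rfl⟩
  exact Nat.sInf_le ⟨f, by rw [hspan, hrad]⟩

end Auxiliary


open Finset

/-- number of pairs `p ≤ q` in `Fin m × Fin m` -/
lemma card_triangle (m : ℕ) :
    ((Finset.univ : Finset (Fin m × Fin m)).filter fun pq => pq.1 ≤ pq.2).card
      = (m+1).choose 2 := by
  classical
  rcases Nat.eq_zero_or_pos m with hm | hm
  · subst hm
    simp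
  set T : Finset (ℕ × ℕ) :=
    (Finset.range m).biUnion (fun q => (Finset.range (q+1)).image (fun p => (p, q))) with hT
  have hmemT : ∀ b : ℕ × ℕ, b ∈ T ↔ (b.1 ≤ b.2 ∧ b.2 < m) := by
    intro b
    rw [hT, Finset.mem_biUnion]
    constructor
    · rintro ⟨q, hq, hb⟩
      rw [Finset.mem_image] at hb
      obtain ⟨p, hp, rfl⟩ := hb
      rw [Finset.mem_range] at hq hp
      exact ⟨by omega, by omega⟩
    · rintro ⟨h1, h2⟩
      refine ⟨b.2, Finset.mem_range.mpr h2, ?_⟩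
      rw [Finset.mem_image]
      exact ⟨b.1, Finset.mem_range.mpr (by omega), by ext <;> rfl⟩
  have hbij : ((Finset.univ : Finset (Fin m × Fin m)).filter fun pq => pq.1 ≤ pq.2).card
      = T.card := by
    refine Finset.card_bij' (fun pq _ => ((pq.1 : ℕ), (pq.2 : ℕ)))
      (fun b _ => ((⟨b.1 % m, Nat.mod_lt _ hm⟩ : Fin m), (⟨b.2 % m, Nat.mod_lt _ hm⟩ : Fin m)))
      ?_ ?_ ?_ ?_
    · intro pq hpq
      rw [Finset.mem_filter] at hpq
      rw [hmemT]
      exact ⟨hpq.2, pq.2.2⟩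
    · intro b hb
      rw [hmemT] at hb
      rw [Finset.mem_filter]
      refine ⟨Finset.mem_univ _, ?_⟩
      show b.1 % m ≤ b.2 % m
      rw [Nat.mod_eq_of_lt (by omega), Nat.mod_eq_of_lt (by omega)]
      exact hb.1
    · rintro ⟨x, y⟩ hpq
      have h1 := x.2
      have h2 := y.2
      simp only [Prod.mk.injEq]
      constructor <;> (apply Fin.ext; exact Nat.mod_eq_of_lt (by omega))
    · rintro ⟨x, y⟩ hb
      rw [hmemT] at hb
      simp only [Prod.mk.injEq]
      exact ⟨Nat.mod_eq_of_lt (by omega), Nat.mod_eq_of_lt (by omega)⟩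
  have hdisj : ∀ q₁ ∈ Finset.range m, ∀ q₂ ∈ Finset.range m, q₁ ≠ q₂ →
      Disjoint ((Finset.range (q₁+1)).image (fun p => (p, q₁)))
        ((Finset.range (q₂+1)).image (fun p => (p, q₂))) := by
    intro q₁ _ q₂ _ hne
    rw [Finset.disjoint_left]
    intro b hb1 hb2
    rw [Finset.mem_image] at hb1 hb2
    obtain ⟨p₁, -, rfl⟩ := hb1
    obtain ⟨p₂, -, h⟩ := hb2
    exact hne (congrArg Prod.snd h).symm
  have hcardT : T.card = ∑ q ∈ Finset.range m, (q+1) := by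
    rw [hT, Finset.card_biUnion hdisj]
    apply Finset.sum_congr rfl
    intro q _
    rw [Finset.card_image_of_injective _ (fun a b hab => (Prod.mk.injEq _ _ _ _).mp hab |>.1),
      Finset.card_range]
  rw [hbij, hcardT]
  have hsum : ∑ q ∈ Finset.range m, (q+1) = (∑ q ∈ Finset.range m, q) + m := by
    rw [Finset.sum_add_distrib, Finset.sum_const, Finset.card_range, smul_eq_mul, mul_one]
  have hid := Finset.sum_range_id_mul_two m
  have h2 : (∑ q ∈ Finset.range m, (q+1)) * 2 = m * (m+1) := by
    rw [hsum, add_mul, hid]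
    cases m with
    | zero => rfl
    | succ k =>
      simp only [Nat.succ_sub_one]
      ring
  have h3 : (m+1).choose 2 * 2 = m * (m+1) := by
    have hdvd : 2 ∣ (m+1) * m := by
      rw [mul_comm]
      exact (Nat.even_mul_succ_self m).two_dvd
    rw [Nat.choose_two_right, Nat.succ_sub_one, Nat.div_mul_cancel hdvd, mul_comm]
  exact Nat.eq_of_mul_eq_mul_right (by omega) (h2.trans h3.symm)

/-- `ara` is at most the cardinality of a finite set generating the ideal up to radical. -/
lemma ara_le_of_finset {R : Type*} [CommRing R] (I : Ideal R) (T : Finset R) (B : ℕ)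
    (hcard : T.card ≤ B) (hrad : (Ideal.span (T : Set R)).radical = I.radical) :
    sInf {k : ℕ | ∃ f : Fin k → R, (Ideal.span (Set.range f)).radical = I.radical} ≤ B := by
  classical
  set f : Fin B → R := fun i => if h : (i : ℕ) < T.card then (T.equivFin.symm ⟨(i:ℕ), h⟩ : R)
    else 0 with hf
  have hspan : Ideal.span (Set.range f) = Ideal.span (T : Set R) := by
    apply le_antisymm
    · rw [Ideal.span_le]
      rintro x ⟨i, rfl⟩
      by_cases h : (i : ℕ) < T.card
      · rw [hf]
        simp only [dif_pos h]
        exact Ideal.subset_span (T.equivFin.symm ⟨(i:ℕ), h⟩).2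
      · rw [hf]
        simp only [dif_neg h]
        exact (Ideal.span (T : Set R)).zero_mem
    · rw [Ideal.span_le]
      intro x hx
      have hx' : x ∈ T := hx
      set j := T.equivFin ⟨x, hx'⟩ with hj
      have hjB : (j : ℕ) < B := lt_of_lt_of_le j.2 hcard
      have : f ⟨(j : ℕ), hjB⟩ = x := by
        rw [hf]
        simp only [dif_pos j.2]
        have : (⟨(j:ℕ), j.2⟩ : Fin T.card) = j := by ext; rfl
        rw [this, Equiv.symm_apply_apply]
      rw [← this]
      exact Ideal.subset_span ⟨_, rfl⟩
  exact Nat.sInf_le ⟨f, by rw [hspan, hrad]⟩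

/-- radical membership via all primes above -/
lemma mem_radical_of_forall_prime {R : Type*} [CommRing R] {I : Ideal R} {x : R}
    (h : ∀ P : Ideal R, P.IsPrime → I ≤ P → x ∈ P) : x ∈ I.radical := by
  rw [Ideal.radical_eq_sInf]
  rw [Submodule.mem_sInf]
  rintro P ⟨hIP, hP⟩
  exact h P hP hIP

lemma unit_mul_mem_radical {R : Type*} [CommRing R] {J : Ideal R} {u y : R}
    (hu : IsUnit u) (h : u * y ∈ J.radical) : y ∈ J.radical := by
  obtain ⟨v, rfl⟩ := hu
  have : y = (↑v⁻¹ : R) * ((v : R) * y) := by rw [← mul_assoc, Units.inv_mul, one_mul]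
  rw [this]
  exact J.radical.mul_mem_left _ h

lemma map_mem_radical {R S : Type*} [CommRing R] [CommRing S] (φ : R →+* S) {I : Ideal R}
    {x : R} (h : x ∈ I.radical) : φ x ∈ (Ideal.map φ I).radical := by
  obtain ⟨n, hn⟩ := h
  exact ⟨n, by rw [← map_pow]; exact Ideal.mem_map_of_mem φ hn⟩

/-- Let `Y` be a `t × n` matrix of indeterminates (with `t ≥ 2`, and `n ≥ 1` so
that the variable `y₁₁` exists) over an infinite field `K` of characteristic
other than two, and let `𝔅 = I₁(YᵀY) ⊆ S = K[Y]`.  Then the arithmetic rank of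
the extended ideal `𝔅·S_{y₁₁}` in the localization `S_{y₁₁}` is at most
`C(n+1,2) - C(n+2-t,2)`. -/
theorem arithmeticRank_symmetric_nullcone_localized_le
    (K : Type) [Field K] [Infinite K] (hK : ringChar K ≠ 2)
    (t n : ℕ) (ht : 2 ≤ t) (hn : 0 < n) :
    ara (Ideal.map
      (algebraMap (MvPolynomial (Fin t × Fin n) K)
        (Localization.Away
          (X ((⟨0, by omega⟩ : Fin t), (⟨0, by omega⟩ : Fin n)) :
            MvPolynomial (Fin t × Fin n) K)))
      (symB K t n)) ≤ (n + 1).choose 2 - (n + 2 - t).choose 2 := by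
  classical
  obtain ⟨τ, rfl⟩ : ∃ τ, t = τ + 2 := ⟨t - 2, by omega⟩
  obtain ⟨ν, rfl⟩ : ∃ ν, n = ν + 1 := ⟨n - 1, by omega⟩
  set S0 := MvPolynomial (Fin (τ+2) × Fin (ν+1)) K with hS0
  set YP : Matrix (Fin (τ+2)) (Fin (ν+1)) S0 := Ysym K (τ+2) (ν+1) with hYP
  set qgen : Fin (ν+1) × Fin (ν+1) → S0 := fun ab => (YPᵀ * YP) ab.1 ab.2 with hqgen
  have hsymB : symB K (τ+2) (ν+1) = Ideal.span (Set.range qgen) := rfl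
  obtain ⟨c₀, hc₀⟩ := exists_generic_matrix K (Fin ν × Fin ν)
  set σP : (Fin ν × Fin ν) → S0 := fun pq => (dvec YP pq.1 ⬝ᵥ dvec YP pq.2)
    + ∑ ab ∈ Finset.univ.filter
        (fun ab : Fin ν × Fin ν => ab.1 < ab.2 ∧ (ab.1:ℕ) + τ ≤ (ab.2:ℕ) ∧
          (ab.1:ℕ) + (ab.2:ℕ) = (pq.1:ℕ) + (pq.2:ℕ)),
      MvPolynomial.C (c₀ pq ab) * (dvec YP ab.1 ⬝ᵥ dvec YP ab.2) with hσP
  set bandReps : Finset (Fin ν × Fin ν) := Finset.univ.filter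
    (fun pq => pq.1 ≤ pq.2 ∧ (pq.2:ℕ) < (pq.1:ℕ) + τ) with hbandReps
  set F₀ : Finset S0 := (Finset.univ.image fun k : Fin (ν+1) => qgen (0, k))
    ∪ (bandReps.image σP) with hF₀
  set x₀ : S0 := X ((⟨0, by omega⟩ : Fin (τ+2)), (⟨0, by omega⟩ : Fin (ν+1))) with hx₀
  have hx00 : x₀ = YP 0 0 := by
    rw [hx₀, hYP]
    show X _ = X _
    congr 1
  -- Claim A: every element of F₀ lies in the radical of 𝔅
  have claimA : ∀ f ∈ F₀, f ∈ (symB K (τ+2) (ν+1)).radical := by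
    intro f hf
    apply mem_radical_of_forall_prime
    intro P hP hle
    rw [hF₀, Finset.mem_union] at hf
    rcases hf with hf | hf
    · rw [Finset.mem_image] at hf
      obtain ⟨k, -, rfl⟩ := hf
      exact hle (by rw [hsymB]; exact Ideal.subset_span ⟨((0 : Fin (ν+1)), k), rfl⟩)
    · rw [Finset.mem_image] at hf
      obtain ⟨pq, -, rfl⟩ := hf
      obtain ⟨F, hField, ψ, hψ⟩ := exists_field_hom P hP
      rw [← hψ]
      have hZ : ∀ a b, ((YP.map ψ)ᵀ * (YP.map ψ)) a b = 0 := by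
        intro a b
        rw [← map_gram, hψ]
        exact hle (by rw [hsymB]; exact Ideal.subset_span ⟨(a, b), rfl⟩)
      have hGzero : ∀ p' q' : Fin ν, ψ (dvec YP p' ⬝ᵥ dvec YP q') = 0 := by
        intro p' q'
        rw [map_dvec_dot]
        exact dvec_dot_eq_zero (YP.map ψ) hZ p' q'
      rw [hσP]
      rw [map_add, map_sum, hGzero]
      rw [Finset.sum_eq_zero (fun ab _ => by rw [_root_.map_mul, hGzero, mul_zero])]
      simp
  -- Claim B: x₀ times each generator lies in the radical of the span of F₀
  have claimB : ∀ ab : Fin (ν+1) × Fin (ν+1),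
      x₀ * qgen ab ∈ (Ideal.span (↑F₀ : Set S0)).radical := by
    intro ab
    apply mem_radical_of_forall_prime
    intro P hP hle
    obtain ⟨F, hField, ψ, hψ⟩ := exists_field_hom P hP
    rw [← hψ, _root_.map_mul]
    have hq0 : ∀ k : Fin (ν+1), ((YP.map ψ)ᵀ * (YP.map ψ)) 0 k = 0 := by
      intro k
      rw [← map_gram, hψ]
      have hmem : qgen (0, k) ∈ F₀ := by
        rw [hF₀]
        exact Finset.mem_union_left _ (Finset.mem_image.mpr ⟨k, Finset.mem_univ _, rfl⟩)
      exact hle (Ideal.subset_span (Finset.mem_coe.mpr hmem))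
    set cF : (Fin ν × Fin ν) → (Fin ν × Fin ν) → F :=
      fun pq ab' => ψ (MvPolynomial.C (c₀ pq ab')) with hcFdef
    have hcFmin : ∀ (k : ℕ) (ρ γ : Fin k → Fin ν × Fin ν), Function.Injective ρ →
        Function.Injective γ → (Matrix.of fun i j => cF (ρ i) (γ j)).det ≠ 0 := by
      intro k ρ γ hρ hγ
      have hinj : Function.Injective (ψ.comp (MvPolynomial.C : K →+* S0)) :=
        (ψ.comp MvPolynomial.C).injective
      have hdet : (Matrix.of fun i j => cF (ρ i) (γ j)).det
          = (ψ.comp (MvPolynomial.C : K →+* S0)) ((Matrix.of fun i j => c₀ (ρ i) (γ j)).det) := by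
        rw [RingHom.map_det]
        congr 1
      rw [hdet]
      intro h0
      exact hc₀ k ρ γ hρ hγ (hinj (by rw [h0, map_zero]))
    have hσY : ∀ p q : Fin ν, p ≤ q → (q:ℕ) < (p:ℕ) + τ →
        ((dvec (YP.map ψ) p ⬝ᵥ dvec (YP.map ψ) q) + ∑ pq ∈ Finset.univ.filter
            (fun pq : Fin ν × Fin ν => pq.1 < pq.2 ∧ (pq.1:ℕ) + τ ≤ (pq.2:ℕ) ∧
              (pq.1:ℕ) + (pq.2:ℕ) = (p:ℕ) + (q:ℕ)),
          cF (p, q) pq * (dvec (YP.map ψ) pq.1 ⬝ᵥ dvec (YP.map ψ) pq.2)) = 0 := by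
      intro p q h1 h2
      have hmem : σP (p, q) ∈ F₀ := by
        rw [hF₀]
        refine Finset.mem_union_right _ (Finset.mem_image.mpr ⟨(p,q), ?_, rfl⟩)
        rw [hbandReps, Finset.mem_filter]
        exact ⟨Finset.mem_univ _, h1, h2⟩
      have h0 : ψ (σP (p, q)) = 0 :=
        (hψ _).mpr (hle (Ideal.subset_span (Finset.mem_coe.mpr hmem)))
      rw [hσP] at h0
      rw [map_add, map_sum, map_dvec_dot] at h0
      have hterm : ∀ ab' ∈ Finset.univ.filter
          (fun ab' : Fin ν × Fin ν => ab'.1 < ab'.2 ∧ (ab'.1:ℕ) + τ ≤ (ab'.2:ℕ) ∧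
            (ab'.1:ℕ) + (ab'.2:ℕ) = (((p,q).1 : Fin ν):ℕ) + (((p,q).2 : Fin ν):ℕ)),
          ψ (MvPolynomial.C (c₀ (p,q) ab') * (dvec YP ab'.1 ⬝ᵥ dvec YP ab'.2))
            = cF (p, q) ab' * (dvec (YP.map ψ) ab'.1 ⬝ᵥ dvec (YP.map ψ) ab'.2) := by
        intro ab' _
        rw [_root_.map_mul, map_dvec_dot]
      rw [Finset.sum_congr rfl hterm] at h0
      exact h0
    rcases nullcone_pointwise cF hcFmin (YP.map ψ) hq0 hσY with h | h
    · have hψx : ψ x₀ = (YP.map ψ) 0 0 := by rw [hx00]; rfl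
      rw [hψx, h, zero_mul]
    · have hψq : ψ (qgen ab) = ((YP.map ψ)ᵀ * (YP.map ψ)) ab.1 ab.2 := map_gram ψ YP ab.1 ab.2
      rw [hψq, h, mul_zero]
  -- pass to the localization
  set A := Localization.Away x₀ with hA
  set φ : S0 →+* A := algebraMap S0 A with hφ
  have hunit : IsUnit (φ x₀) := IsLocalization.Away.algebraMap_isUnit x₀
  set T := F₀.image φ with hT
  have hradeq : (Ideal.span (↑T : Set A)).radical
      = (Ideal.map φ (symB K (τ+2) (ν+1))).radical := by
    apply le_antisymm
    · have h1 : Ideal.span (↑T : Set A) ≤ (Ideal.map φ (symB K (τ+2) (ν+1))).radical := by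
        rw [Ideal.span_le, hT, Finset.coe_image]
        rintro y ⟨f, hf, rfl⟩
        exact map_mem_radical φ (claimA f hf)
      calc (Ideal.span (↑T : Set A)).radical
          ≤ ((Ideal.map φ (symB K (τ+2) (ν+1))).radical).radical := Ideal.radical_mono h1
        _ = _ := Ideal.radical_idem _
    · have h2 : Ideal.map φ (symB K (τ+2) (ν+1)) ≤ (Ideal.span (↑T : Set A)).radical := by
        rw [hsymB, Ideal.map_span, Ideal.span_le]
        rintro y ⟨x, ⟨ab, rfl⟩, rfl⟩
        have h3 : φ (x₀ * qgen ab) ∈ (Ideal.span (↑T : Set A)).radical := by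
          have h4 := map_mem_radical φ (claimB ab)
          rwa [Ideal.map_span, ← Finset.coe_image, ← hT] at h4
        rw [_root_.map_mul] at h3
        exact unit_mul_mem_radical hunit h3
      calc (Ideal.map φ (symB K (τ+2) (ν+1))).radical
          ≤ ((Ideal.span (↑T : Set A)).radical).radical := Ideal.radical_mono h2
        _ = _ := Ideal.radical_idem _
  -- cardinality bound
  have hcard : T.card ≤ (ν + 1 + 1).choose 2 - (ν + 1 + 2 - (τ + 2)).choose 2 := by
    have hc1 : T.card ≤ F₀.card := Finset.card_image_le
    have hc2 : F₀.card ≤ (ν+1) + bandReps.card := by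
      rw [hF₀]
      refine le_trans (Finset.card_union_le _ _) ?_
      have hu1 : (Finset.univ.image fun k : Fin (ν+1) => qgen (0, k)).card ≤ ν + 1 := by
        refine le_trans Finset.card_image_le ?_
        rw [Finset.card_univ, Fintype.card_fin]
      have hu2 : (bandReps.image σP).card ≤ bandReps.card := Finset.card_image_le
      omega
    set Pall := (Finset.univ : Finset (Fin ν × Fin ν)).filter (fun pq => pq.1 ≤ pq.2)
      with hPall
    have hPcard : Pall.card = (ν+1).choose 2 := card_triangle ν
    have hbandsplit : bandReps.card
        + (Pall.filter (fun pq => ¬ ((pq.2:ℕ) < (pq.1:ℕ) + τ))).card = Pall.card := by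
      have hbr : bandReps = Pall.filter (fun pq => (pq.2:ℕ) < (pq.1:ℕ) + τ) := by
        rw [hbandReps, hPall, Finset.filter_filter]
      rw [hbr]
      exact Finset.card_filter_add_card_filter_not _
    have hdropLB : (ν + 1 - τ).choose 2
        ≤ (Pall.filter (fun pq => ¬ ((pq.2:ℕ) < (pq.1:ℕ) + τ))).card := by
      rcases le_or_gt ν τ with hcase | hcase
      · have h0 : (ν + 1 - τ).choose 2 = 0 := Nat.choose_eq_zero_of_lt (by omega)
        omega
      · have htri := card_triangle (ν - τ)
        have hmap : ∀ pq ∈ ((Finset.univ : Finset (Fin (ν-τ) × Fin (ν-τ))).filter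
            fun pq => pq.1 ≤ pq.2),
            ((⟨(pq.1:ℕ), by have := pq.1.2; omega⟩ : Fin ν),
             (⟨(pq.2:ℕ) + τ, by have := pq.2.2; omega⟩ : Fin ν))
              ∈ Pall.filter (fun pq => ¬ ((pq.2:ℕ) < (pq.1:ℕ) + τ)) := by
          intro pq hpq
          rw [Finset.mem_filter] at hpq
          have hle' : (pq.1:ℕ) ≤ (pq.2:ℕ) := hpq.2
          rw [Finset.mem_filter, hPall, Finset.mem_filter]
          refine ⟨⟨Finset.mem_univ _, ?_⟩, ?_⟩
          · show ((⟨(pq.1:ℕ), _⟩ : Fin ν) ≤ ⟨(pq.2:ℕ) + τ, _⟩)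
            rw [Fin.mk_le_mk]
            omega
          · show ¬ ((pq.2:ℕ) + τ < (pq.1:ℕ) + τ)
            omega
        have hinjOn : Set.InjOn (fun pq : Fin (ν-τ) × Fin (ν-τ) =>
            ((⟨(pq.1:ℕ), by have := pq.1.2; omega⟩ : Fin ν),
             (⟨(pq.2:ℕ) + τ, by have := pq.2.2; omega⟩ : Fin ν)))
            ↑((Finset.univ : Finset (Fin (ν-τ) × Fin (ν-τ))).filter fun pq => pq.1 ≤ pq.2) := by
          intro a _ b _ heq
          simp only [Prod.mk.injEq, Fin.mk.injEq] at heq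
          have e1 : a = (a.1, a.2) := rfl
          have e2 : b = (b.1, b.2) := rfl
          rw [e1, e2, Prod.mk.injEq]
          constructor
          · exact Fin.ext heq.1
          · exact Fin.ext (by omega)
        have hfin := Finset.card_le_card_of_injOn _ hmap hinjOn
        rw [htri] at hfin
        have harg : ν - τ + 1 = ν + 1 - τ := by omega
        rw [harg] at hfin
        exact hfin
    have hpascal : (ν+1+1).choose 2 = (ν+1).choose 2 + (ν+1) := by
      have hcs : (ν+1+1).choose 2 = (ν+1).choose 1 + (ν+1).choose 2 := rfl
      rw [Nat.choose_one_right] at hcs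
      omega
    have hchle : (ν + 1 - τ).choose 2 ≤ (ν+1).choose 2 :=
      Nat.choose_le_choose 2 (by omega)
    have harg2 : ν + 1 + 2 - (τ + 2) = ν + 1 - τ := by omega
    rw [harg2]
    omega
  exact ara_le_of_finset' _ T _ hcard hradeq
end
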